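/- arXiv:2311.08220 — 2 statements merged into one kernel-verified Lean document; each statement's English description precedes it below -/
import Mathlib

section
/- For finite-valued random variables U, S, V, X, Y with joint law factorizing as Q_V(v)·Q_S(s)·Q_{U|S,V}(u|s,v)·Q_{X|U,V}(x|u,v)·Q_{Y|X,S}(y|x,s) where Y = X ⊕ S almost surely (values in Z_A), one has I(U; Y | V) − I(U; S | V) ≤ log A − H(S). -/
/-!
With `W = (U, V)`, the difference `I(U;Y|V) − I(U;S|V)` equals
`H(Y,V) − H(S,V) + H(S,W) − H(Y,W)`. Since `S` and `V` are independent,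
`H(S,V) = H(S) + H(V)`, and `H(Y,V) ≤ log A + H(V)` because `Y` takes `A` values.
It remains to see `H(S,W) ≤ H(Y,W)`. Given `W`, `S` and `X` are conditionally independent,
and `(s, x, w) ↦ (x + s, x, w)` is a bijection carrying `(S, X, W)` to `(Y, X, W)` almost surely,
so by submodularity of entropy
`H(S,W) = H(S,X,W) + H(W) − H(X,W) = H(Y,X,W) + H(W) − H(X,W) ≤ H(Y,W)`.
Every entropy inequality used is an instance of Gibbs' inequality, applied to entropies written
as expectations `H(X) = -∑ ω, p ω * log P(X = X ω)` over the sample space.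
-/

open Finset

/-- Probability of the event `X = x` under the pmf `p` on a finite sample space. -/
noncomputable def pr {Ω : Type*} [Fintype Ω] {α : Type*} [DecidableEq α]
    (p : Ω → ℝ) (X : Ω → α) (x : α) : ℝ :=
  ∑ ω : Ω, if X ω = x then p ω else 0

/-- `p` is a probability mass function on the finite sample space `Ω`. -/
def IsPMF {Ω : Type*} [Fintype Ω] (p : Ω → ℝ) : Prop :=
  (∀ ω, 0 ≤ p ω) ∧ ∑ ω : Ω, p ω = 1

/-- Shannon entropy (natural log) of the random variable `X`. -/
noncomputable def ent {Ω : Type*} [Fintype Ω] {α : Type*} [Fintype α] [DecidableEq α]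
    (p : Ω → ℝ) (X : Ω → α) : ℝ :=
  -∑ x : α, pr p X x * Real.log (pr p X x)

/-- Mutual information `I(X;Y) = H(X) + H(Y) - H(X,Y)`. -/
noncomputable def mi {Ω : Type*} [Fintype Ω] {α β : Type*} [Fintype α] [DecidableEq α]
    [Fintype β] [DecidableEq β] (p : Ω → ℝ) (X : Ω → α) (Y : Ω → β) : ℝ :=
  ent p X + ent p Y - ent p (fun ω => (X ω, Y ω))

/-- Conditional entropy `H(X|Z) = H(X,Z) - H(Z)`. -/
noncomputable def cent {Ω : Type*} [Fintype Ω] {α γ : Type*} [Fintype α] [DecidableEq α]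
    [Fintype γ] [DecidableEq γ] (p : Ω → ℝ) (X : Ω → α) (Z : Ω → γ) : ℝ :=
  ent p (fun ω => (X ω, Z ω)) - ent p Z

/-- Conditional mutual information `I(X;Y|Z) = H(X|Z) + H(Y|Z) - H(X,Y|Z)`. -/
noncomputable def cmi {Ω : Type*} [Fintype Ω] {α β γ : Type*} [Fintype α] [DecidableEq α]
    [Fintype β] [DecidableEq β] [Fintype γ] [DecidableEq γ]
    (p : Ω → ℝ) (X : Ω → α) (Y : Ω → β) (Z : Ω → γ) : ℝ :=
  cent p X Z + cent p Y Z - cent p (fun ω => (X ω, Y ω)) Z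

/-- `X` and `Y` are independent under `p`. -/
def IndepRV {Ω : Type*} [Fintype Ω] {α β : Type*} [DecidableEq α] [DecidableEq β]
    (p : Ω → ℝ) (X : Ω → α) (Y : Ω → β) : Prop :=
  ∀ x y, pr p (fun ω => (X ω, Y ω)) (x, y) = pr p X x * pr p Y y

open Real

section Law

variable {Ω τ α : Type*} [Fintype Ω] [DecidableEq α] (p : Ω → ℝ)

theorem pr_nonneg (hp : ∀ ω, 0 ≤ p ω) (X : Ω → α) (x : α) : 0 ≤ pr p X x :=
  sum_nonneg fun ω _ => by split_ifs <;> simp [hp ω]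

theorem le_pr_apply (hp : ∀ ω, 0 ≤ p ω) (X : Ω → α) (ω : Ω) : p ω ≤ pr p X (X ω) := by
  have h := single_le_sum (f := fun ω' => if X ω' = X ω then p ω' else 0)
    (fun ω' _ => by split_ifs <;> simp [hp ω']) (mem_univ ω)
  rwa [if_pos rfl] at h

theorem pr_apply_pos (hp : ∀ ω, 0 ≤ p ω) (X : Ω → α) {ω : Ω} (hω : p ω ≠ 0) :
    0 < pr p X (X ω) :=
  (lt_of_le_of_ne (hp ω) hω.symm).trans_le (le_pr_apply p hp X ω)

theorem pr_congr {X X' : Ω → α} (h : ∀ ω, p ω ≠ 0 → X ω = X' ω) : pr p X = pr p X' := by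
  funext x
  refine sum_congr rfl fun ω _ => ?_
  by_cases hω : p ω = 0
  · simp [hω]
  · rw [h ω hω]

theorem sum_mul_comp_eq_sum_pr_mul [Fintype α] (X : Ω → α) (g : α → ℝ) :
    ∑ ω, p ω * g (X ω) = ∑ x, pr p X x * g x := by
  simp only [pr, sum_mul, ite_mul, zero_mul]
  rw [sum_comm]
  simp

theorem sum_pr [Fintype α] (X : Ω → α) : ∑ x, pr p X x = ∑ ω, p ω := by
  simpa using (sum_mul_comp_eq_sum_pr_mul p X fun _ => 1).symm

theorem pr_comp [Fintype τ] [DecidableEq τ] (W : Ω → τ) (f : τ → α) (a : α) :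
    pr p (fun ω => f (W ω)) a = ∑ t, if f t = a then pr p W t else 0 := by
  simpa [pr, mul_ite] using sum_mul_comp_eq_sum_pr_mul p W fun t => if f t = a then 1 else 0

theorem pr_comp_of_injective [DecidableEq τ] {f : τ → α} (hf : Function.Injective f)
    (W : Ω → τ) (t : τ) : pr p (fun ω => f (W ω)) (f t) = pr p W t := by
  simp [pr, hf.eq_iff]

end Law

section Independence

variable {Ω α β γ : Type*} [Fintype Ω] [DecidableEq α] [DecidableEq β] [DecidableEq γ]
  (p : Ω → ℝ) (X : Ω → α) (Y : Ω → β) (Z : Ω → γ)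

theorem sum_pr_pair_right [Fintype γ] (x : α) :
    ∑ z, pr p (fun ω => (X ω, Z ω)) (x, z) = pr p X x := by
  simp only [pr, Prod.mk.injEq, ite_and]
  rw [sum_comm]
  simp

theorem sum_pr_pair_left [Fintype α] (z : γ) :
    ∑ x, pr p (fun ω => (X ω, Z ω)) (x, z) = pr p Z z := by
  simp only [pr, Prod.mk.injEq, ite_and]
  rw [sum_comm]
  simp

theorem sum_pr_triple_mid [Fintype β] (x : α) (z : γ) :
    ∑ y, pr p (fun ω => (X ω, Y ω, Z ω)) (x, y, z) = pr p (fun ω => (X ω, Z ω)) (x, z) := by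
  simp only [pr, Prod.mk.injEq, ite_and]
  rw [sum_comm]
  simp

theorem indepRV_of_pr_pair_eq_mul [Fintype α] [Fintype γ] (hp : ∑ ω, p ω = 1)
    (f : α → ℝ) (g : γ → ℝ) (h : ∀ x z, pr p (fun ω => (X ω, Z ω)) (x, z) = f x * g z) :
    IndepRV p X Z := by
  have hX : ∀ x, pr p X x = f x * ∑ z, g z := fun x => by
    rw [← sum_pr_pair_right p X Z x, mul_sum]; simp only [h]
  have hZ : ∀ z, pr p Z z = (∑ x, f x) * g z := fun z => by
    rw [← sum_pr_pair_left p X Z z, sum_mul]; simp only [h]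
  have hfg : (∑ x, f x) * ∑ z, g z = 1 := by
    rw [← hp, ← sum_pr p X, sum_mul]; simp only [hX]
  intro x z
  rw [h, hX, hZ]
  linear_combination (f x * g z) * hfg.symm

-- Division-free form of `P(x, y | z) = P(x | z) * P(y | z)`.
def CondIndepRV : Prop :=
  ∀ x y z, pr p (fun ω => (X ω, Y ω, Z ω)) (x, y, z) * pr p Z z
    = pr p (fun ω => (X ω, Z ω)) (x, z) * pr p (fun ω => (Y ω, Z ω)) (y, z)

theorem condIndepRV_of_pr_triple_eq_mul [Fintype α] [Fintype β] (f : α → γ → ℝ) (g : β → γ → ℝ)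
    (h : ∀ x y z, pr p (fun ω => (X ω, Y ω, Z ω)) (x, y, z) = f x z * g y z) :
    CondIndepRV p X Y Z := by
  have hXZ : ∀ x z, pr p (fun ω => (X ω, Z ω)) (x, z) = f x z * ∑ y, g y z := fun x z => by
    rw [← sum_pr_triple_mid p X Y Z, mul_sum]; simp only [h]
  have hYZ : ∀ y z, pr p (fun ω => (Y ω, Z ω)) (y, z) = (∑ x, f x z) * g y z := fun y z => by
    rw [← sum_pr_pair_left p X (fun ω => (Y ω, Z ω)), sum_mul]; simp only [h]
  intro x y z
  rw [← sum_pr_pair_left p X Z z, h, hXZ, hYZ]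
  simp only [hXZ, ← sum_mul]
  ring

end Independence

section Entropy

variable {Ω α β γ τ : Type*} [Fintype Ω] [Fintype α] [DecidableEq α] [Fintype β] [DecidableEq β]
  [Fintype γ] [DecidableEq γ] [Fintype τ] [DecidableEq τ] (p : Ω → ℝ)

theorem ent_eq_neg_sum (X : Ω → α) : ent p X = -∑ ω, p ω * log (pr p X (X ω)) := by
  rw [ent, sum_mul_comp_eq_sum_pr_mul p X fun x => log (pr p X x)]

theorem ent_congr {X X' : Ω → α} (h : ∀ ω, p ω ≠ 0 → X ω = X' ω) : ent p X = ent p X' := by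
  rw [ent, ent, pr_congr p h]

theorem ent_comp_of_injective {f : α → β} (hf : Function.Injective f) (X : Ω → α) :
    ent p (fun ω => f (X ω)) = ent p X := by
  simp only [ent_eq_neg_sum, pr_comp_of_injective p hf]

theorem ent_le_neg_sum_mul_log (hp : ∀ ω, 0 ≤ p ω) (W : Ω → τ) (g : τ → ℝ)
    (hg : ∀ t, 0 ≤ g t) (hpos : ∀ ω, p ω ≠ 0 → 0 < g (W ω)) (hsum : ∑ t, g t ≤ ∑ ω, p ω) :
    ent p W ≤ -∑ ω, p ω * log (g (W ω)) := by
  have hpt : ∀ ω, p ω * log (g (W ω)) - p ω * log (pr p W (W ω))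
      ≤ p ω * (g (W ω) / pr p W (W ω)) - p ω := by
    intro ω
    by_cases hω : p ω = 0
    · simp [hω]
    have hJ := pr_apply_pos p hp W hω
    have := log_le_sub_one_of_pos (div_pos (hpos ω hω) hJ)
    rw [log_div (hpos ω hω).ne' hJ.ne'] at this
    nlinarith [hp ω]
  have hratio : ∑ ω, p ω * (g (W ω) / pr p W (W ω)) ≤ ∑ ω, p ω := by
    rw [sum_mul_comp_eq_sum_pr_mul p W fun t => g t / pr p W t]
    refine le_trans (sum_le_sum fun t _ => ?_) hsum
    rcases eq_or_ne (pr p W t) 0 with h | h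
    · simp [h, hg t]
    · rw [mul_div_cancel₀ _ h]
  have htotal := sum_le_sum fun ω (_ : ω ∈ univ) => hpt ω
  rw [sum_sub_distrib, sum_sub_distrib] at htotal
  rw [ent_eq_neg_sum]
  linarith

theorem ent_pair_le_log_card_add_ent [Nonempty β] (hp : IsPMF p) (Y : Ω → β) (Z : Ω → γ) :
    ent p (fun ω => (Y ω, Z ω)) ≤ log (Fintype.card β) + ent p Z := by
  have hcard : (0 : ℝ) < Fintype.card β := by exact_mod_cast Fintype.card_pos
  have hsum : ∑ t : β × γ, pr p Z t.2 / Fintype.card β = ∑ ω, p ω := by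
    simp only [Fintype.sum_prod_type, ← sum_div, sum_pr, sum_const, card_univ, nsmul_eq_mul]
    field_simp
  have hlog : ∀ ω, p ω * log (pr p Z (Z ω) / Fintype.card β)
      = p ω * log (pr p Z (Z ω)) - p ω * log (Fintype.card β) := by
    intro ω
    by_cases hω : p ω = 0
    · simp [hω]
    rw [log_div (pr_apply_pos p hp.1 Z hω).ne' hcard.ne']
    ring
  calc ent p (fun ω => (Y ω, Z ω))
      ≤ -∑ ω, p ω * log (pr p Z (Z ω) / Fintype.card β) :=
        ent_le_neg_sum_mul_log p hp.1 (fun ω => (Y ω, Z ω))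
          (fun t => pr p Z t.2 / Fintype.card β)
          (fun t => div_nonneg (pr_nonneg p hp.1 Z t.2) hcard.le)
          (fun ω hω => div_pos (pr_apply_pos p hp.1 Z hω) hcard) hsum.le
    _ = log (Fintype.card β) + ent p Z := by
        rw [ent_eq_neg_sum p Z, sum_congr rfl fun ω _ => hlog ω, sum_sub_distrib, ← sum_mul,
          hp.2]
        ring

theorem ent_pair_of_indepRV (hp : ∀ ω, 0 ≤ p ω) (X : Ω → α) (Z : Ω → γ) (h : IndepRV p X Z) :
    ent p (fun ω => (X ω, Z ω)) = ent p X + ent p Z := by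
  have hpt : ∀ ω, p ω * log (pr p (fun ω => (X ω, Z ω)) (X ω, Z ω))
      = p ω * log (pr p X (X ω)) + p ω * log (pr p Z (Z ω)) := by
    intro ω
    by_cases hω : p ω = 0
    · simp [hω]
    rw [h, log_mul (pr_apply_pos p hp X hω).ne' (pr_apply_pos p hp Z hω).ne']
    ring
  simp only [ent_eq_neg_sum p (fun ω => (X ω, Z ω)), hpt, sum_add_distrib, ent_eq_neg_sum p X,
    ent_eq_neg_sum p Z]
  ring

theorem ent_triple_add_ent_le (hp : ∀ ω, 0 ≤ p ω) (X : Ω → α) (Y : Ω → β) (Z : Ω → γ) :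
    ent p (fun ω => (X ω, Y ω, Z ω)) + ent p Z
      ≤ ent p (fun ω => (X ω, Z ω)) + ent p (fun ω => (Y ω, Z ω)) := by
  set m₁ := pr p (fun ω => (X ω, Z ω))
  set m₂ := pr p (fun ω => (Y ω, Z ω))
  set m₃ := pr p Z
  have hsum : ∑ t : α × β × γ, m₁ (t.1, t.2.2) * m₂ (t.2.1, t.2.2) / m₃ t.2.2 = ∑ ω, p ω := by
    rw [Fintype.sum_prod_type_right, Fintype.sum_prod_type_right]
    simp only [m₁, m₂, m₃, ← sum_div, ← sum_mul, ← mul_sum, sum_pr_pair_left, mul_self_div_self,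
      sum_pr]
  have hpos : ∀ ω, p ω ≠ 0 → 0 < m₁ (X ω, Z ω) ∧ 0 < m₂ (Y ω, Z ω) ∧ 0 < m₃ (Z ω) :=
    fun ω hω => ⟨pr_apply_pos p hp (fun ω => (X ω, Z ω)) hω,
      pr_apply_pos p hp (fun ω => (Y ω, Z ω)) hω, pr_apply_pos p hp Z hω⟩
  have hlog : ∀ ω, p ω * log (m₁ (X ω, Z ω) * m₂ (Y ω, Z ω) / m₃ (Z ω))
      = p ω * log (m₁ (X ω, Z ω)) + p ω * log (m₂ (Y ω, Z ω)) - p ω * log (m₃ (Z ω)) := by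
    intro ω
    by_cases hω : p ω = 0
    · simp [hω]
    obtain ⟨h₁, h₂, h₃⟩ := hpos ω hω
    rw [log_div (mul_pos h₁ h₂).ne' h₃.ne', log_mul h₁.ne' h₂.ne']
    ring
  -- Gibbs' inequality against the law under which `X` and `Y` are independent given `Z`.
  have hgibbs := ent_le_neg_sum_mul_log p hp (fun ω => (X ω, Y ω, Z ω))
    (fun t => m₁ (t.1, t.2.2) * m₂ (t.2.1, t.2.2) / m₃ t.2.2)
    (fun t => div_nonneg (mul_nonneg (pr_nonneg p hp _ _) (pr_nonneg p hp _ _))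
      (pr_nonneg p hp _ _))
    (fun ω hω => have h := hpos ω hω; div_pos (mul_pos h.1 h.2.1) h.2.2) hsum.le
  simp only [hlog, sum_sub_distrib, sum_add_distrib] at hgibbs
  rw [ent_eq_neg_sum p Z, ent_eq_neg_sum p (fun ω => (X ω, Z ω)),
    ent_eq_neg_sum p (fun ω => (Y ω, Z ω))]
  linarith

theorem ent_triple_add_ent_of_condIndepRV (hp : ∀ ω, 0 ≤ p ω) (X : Ω → α) (Y : Ω → β)
    (Z : Ω → γ) (h : CondIndepRV p X Y Z) :
    ent p (fun ω => (X ω, Y ω, Z ω)) + ent p Z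
      = ent p (fun ω => (X ω, Z ω)) + ent p (fun ω => (Y ω, Z ω)) := by
  have hpt : ∀ ω, p ω * log (pr p (fun ω => (X ω, Y ω, Z ω)) (X ω, Y ω, Z ω))
        + p ω * log (pr p Z (Z ω))
      = p ω * log (pr p (fun ω => (X ω, Z ω)) (X ω, Z ω))
        + p ω * log (pr p (fun ω => (Y ω, Z ω)) (Y ω, Z ω)) := by
    intro ω
    by_cases hω : p ω = 0
    · simp [hω]
    rw [← mul_add, ← mul_add, ← log_mul (pr_apply_pos p hp (fun ω => (X ω, Y ω, Z ω)) hω).ne'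
      (pr_apply_pos p hp Z hω).ne', ← log_mul (pr_apply_pos p hp (fun ω => (X ω, Z ω)) hω).ne'
      (pr_apply_pos p hp (fun ω => (Y ω, Z ω)) hω).ne', h]
  simp only [ent_eq_neg_sum p (fun ω => (X ω, Y ω, Z ω)), ent_eq_neg_sum p Z,
    ent_eq_neg_sum p (fun ω => (X ω, Z ω)), ent_eq_neg_sum p (fun ω => (Y ω, Z ω))]
  rw [← neg_add, ← neg_add, ← sum_add_distrib, ← sum_add_distrib, sum_congr rfl fun ω _ => hpt ω]

theorem ent_pair_le_ent_add_pair_of_condIndepRV {G : Type*} [AddGroup G] [Fintype G]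
    [DecidableEq G] (hp : ∀ ω, 0 ≤ p ω) (S X : Ω → G) (W : Ω → γ) (h : CondIndepRV p S X W) :
    ent p (fun ω => (S ω, W ω)) ≤ ent p (fun ω => (X ω + S ω, W ω)) := by
  have hinj : Function.Injective fun t : G × G × γ => (t.2.1 + t.1, t.2.1, t.2.2) := by
    rintro ⟨s, x, w⟩ ⟨s', x', w'⟩ h
    simp only [Prod.mk.injEq] at h
    obtain ⟨hs, rfl, rfl⟩ := h
    rw [add_left_cancel hs]
  have hshift := ent_comp_of_injective p hinj fun ω => (S ω, X ω, W ω)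
  have hsub := ent_triple_add_ent_le p hp (fun ω => X ω + S ω) X W
  have hci := ent_triple_add_ent_of_condIndepRV p hp S X W h
  dsimp only at hshift hsub hci
  linarith

end Entropy

theorem stmt5_general {Ω : Type*} [Fintype Ω] {A : ℕ} [NeZero A] {𝓥 𝓤 : Type*}
    [Fintype 𝓥] [DecidableEq 𝓥] [Fintype 𝓤] [DecidableEq 𝓤]
    (p : Ω → ℝ) (hp : IsPMF p)
    (V : Ω → 𝓥) (S : Ω → ZMod A) (U : Ω → 𝓤) (X : Ω → ZMod A) (Y : Ω → ZMod A)
    (QV : 𝓥 → ℝ) (QS : ZMod A → ℝ)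
    (QUSV : 𝓤 → ZMod A → 𝓥 → ℝ) (QXUV : ZMod A → 𝓤 → 𝓥 → ℝ)
    (hQUSV1 : ∀ s v, ∑ u : 𝓤, QUSV u s v = 1)
    (hQXUV1 : ∀ u v, ∑ x : ZMod A, QXUV x u v = 1)
    (hfact : ∀ (v : 𝓥) (s : ZMod A) (u : 𝓤) (x y : ZMod A),
      pr p (fun ω => (V ω, S ω, U ω, X ω, Y ω)) (v, s, u, x, y)
        = QV v * QS s * QUSV u s v * QXUV x u v * (if y = x + s then 1 else 0)) :
    cmi p U Y V - cmi p U S V ≤ Real.log A - ent p S := by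
  have hY : ∀ ω, p ω ≠ 0 → Y ω = X ω + S ω := fun ω hω => by
    by_contra hne
    have := pr_apply_pos p hp.1 (fun ω => (V ω, S ω, U ω, X ω, Y ω)) hω
    simp [hfact, hne] at this
  have hSXUV : ∀ s x u v, pr p (fun ω => (S ω, X ω, U ω, V ω)) (s, x, u, v)
      = QV v * QS s * QUSV u s v * QXUV x u v := fun s x u v => by
    refine (pr_comp p (fun ω => (V ω, S ω, U ω, X ω, Y ω))
      (fun t => (t.2.1, t.2.2.2.1, t.2.2.1, t.1)) (s, x, u, v)).trans ?_
    simp [Fintype.sum_prod_type, hfact, ite_and]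
  have hSV : ∀ s v, pr p (fun ω => (S ω, V ω)) (s, v) = QS s * QV v := fun s v => by
    simp only [← sum_pr_triple_mid p S U V, ← sum_pr_triple_mid p S X (fun ω => (U ω, V ω)),
      hSXUV, ← mul_sum, hQXUV1, mul_one, hQUSV1]
    ring
  have hSX : CondIndepRV p S X fun ω => (U ω, V ω) :=
    condIndepRV_of_pr_triple_eq_mul p S X (fun ω => (U ω, V ω))
      (fun s w => QV w.2 * QS s * QUSV w.1 s w.2) (fun x w => QXUV x w.1 w.2)
      fun s x w => hSXUV s x w.1 w.2
  have hSY : ent p (fun ω => (S ω, U ω, V ω)) ≤ ent p (fun ω => (Y ω, U ω, V ω)) := by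
    rw [ent_congr p fun ω hω => show (Y ω, U ω, V ω) = (X ω + S ω, U ω, V ω) by rw [hY ω hω]]
    exact ent_pair_le_ent_add_pair_of_condIndepRV p hp.1 S X (fun ω => (U ω, V ω)) hSX
  have hYV := ent_pair_le_log_card_add_ent p hp Y V
  rw [ZMod.card] at hYV
  have hSVent :=
    ent_pair_of_indepRV p hp.1 S V (indepRV_of_pr_pair_eq_mul p S V hp.2 QS QV hSV)
  have hassoc : ∀ T : Ω → ZMod A,
      ent p (fun ω => ((U ω, T ω), V ω)) = ent p (fun ω => (T ω, U ω, V ω)) := fun T =>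
    ent_comp_of_injective p (f := fun t : ZMod A × 𝓤 × 𝓥 => ((t.2.1, t.1), t.2.2))
      (by rintro ⟨t, u, v⟩ ⟨t', u', v'⟩ h; simp_all) fun ω => (T ω, U ω, V ω)
  simp only [cmi, cent, hassoc]
  linarith

/-- If the joint law of `(V,S,U,X,Y)` factorizes as
`Q_V(v) Q_S(s) Q_{U|S,V}(u|s,v) Q_{X|U,V}(x|u,v) Q_{Y|X,S}(y|x,s)` where the channel
`Q_{Y|X,S}` is the deterministic mod-`A` adder `Y = X ⊕ S`, then
`I(U;Y|V) − I(U;S|V) ≤ log A − H(S)`. -/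
theorem stmt5 {Ω : Type*} [Fintype Ω] {A : ℕ} [NeZero A] {𝓥 𝓤 : Type*}
    [Fintype 𝓥] [DecidableEq 𝓥] [Fintype 𝓤] [DecidableEq 𝓤]
    (p : Ω → ℝ) (hp : IsPMF p)
    (V : Ω → 𝓥) (S : Ω → ZMod A) (U : Ω → 𝓤) (X : Ω → ZMod A) (Y : Ω → ZMod A)
    (QV : 𝓥 → ℝ) (QS : ZMod A → ℝ)
    (QUSV : 𝓤 → ZMod A → 𝓥 → ℝ) (QXUV : ZMod A → 𝓤 → 𝓥 → ℝ)
    (hQVpos : ∀ v, 0 ≤ QV v) (hQV1 : ∑ v : 𝓥, QV v = 1)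
    (hQSpos : ∀ s, 0 ≤ QS s) (hQS1 : ∑ s : ZMod A, QS s = 1)
    (hQUSVpos : ∀ u s v, 0 ≤ QUSV u s v) (hQUSV1 : ∀ s v, ∑ u : 𝓤, QUSV u s v = 1)
    (hQXUVpos : ∀ x u v, 0 ≤ QXUV x u v) (hQXUV1 : ∀ u v, ∑ x : ZMod A, QXUV x u v = 1)
    (hfact : ∀ (v : 𝓥) (s : ZMod A) (u : 𝓤) (x y : ZMod A),
      pr p (fun ω => (V ω, S ω, U ω, X ω, Y ω)) (v, s, u, x, y)
        = QV v * QS s * QUSV u s v * QXUV x u v * (if y = x + s then 1 else 0)) :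
    cmi p U Y V - cmi p U S V ≤ Real.log A - ent p S :=
  stmt5_general p hp V S U X Y QV QS QUSV QXUV hQUSV1 hQXUV1 hfact
end

section
/- Let g : ℝ≥0 → ℝ be any function, V a finite set, Q_V a probability distribution on V, and (R_v)_{v∈V} nonnegative reals with ∑_v Q_V(v) R_v = R. Then there exist a set V' with |V'| ≤ 3, a probability distribution Q' on V', and (R'_v)_{v∈V'} with ∑ Q'(v) R'_v = R and ∑_v Q'(v) g(R'_v) ≥ ∑_v Q_V(v) g(R_v). -/
/-!
The point `(R, ∑ Q_V(v) g(R_v))` is a convex combination of points `(r, g r)` on the graph of `g`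
in `ℝ²`, so by Carathéodory's theorem it is a convex combination of three such points. Reading off
the two coordinates gives the rate constraint and the objective, the latter even with equality.
-/

open Function in
theorem exists_sum_smul_eq_of_mem_convexHull_range {𝕜 E V κ : Type*} [Field 𝕜] [LinearOrder 𝕜]
    [IsStrictOrderedRing 𝕜] [AddCommGroup E] [Module 𝕜 E] [FiniteDimensional 𝕜 E] [Fintype κ]
    {p : V → E} {x : E} (hx : x ∈ convexHull 𝕜 (Set.range p))
    (hκ : Module.finrank 𝕜 E + 1 ≤ Fintype.card κ) :
    ∃ (w : κ → 𝕜) (u : κ → V), (∀ i, 0 ≤ w i) ∧ ∑ i, w i = 1 ∧ ∑ i, w i • p (u i) = x := by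
  obtain ⟨ι, _, z, w, hz, hzind, hw0, hw1, hwz⟩ := eq_pos_convex_span_of_mem_convexHull hx
  choose u hu using fun j ↦ hz (Set.mem_range_self j)
  have hι : Fintype.card ι ≤ Fintype.card κ :=
    hzind.card_le_finrank_succ.trans <| (Nat.succ_le_succ (Submodule.finrank_le _)).trans hκ
  obtain ⟨e⟩ := Embedding.nonempty_of_card_le hι
  obtain ⟨v₀⟩ : Nonempty V :=
    Set.range_nonempty_iff_nonempty.mp (convexHull_nonempty_iff.mp ⟨x, hx⟩)
  refine ⟨extend e w 0, extend e u fun _ ↦ v₀, fun i ↦ ?_, ?_, ?_⟩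
  · by_cases hi : ∃ j, e j = i
    · obtain ⟨j, rfl⟩ := hi
      simpa [e.injective.extend_apply] using (hw0 j).le
    · simp [extend_apply' _ _ _ hi]
  · rw [← hw1]
    refine (Fintype.sum_of_injective e e.injective _ _ (fun i hi ↦ ?_) fun j ↦ ?_).symm
    · simp [extend_apply' _ _ _ hi]
    · simp [e.injective.extend_apply]
  · rw [← hwz]
    refine (Fintype.sum_of_injective e e.injective _ _ (fun i hi ↦ ?_) fun j ↦ ?_).symm
    · simp [extend_apply' _ _ _ hi]
    · simp [e.injective.extend_apply, hu]

/-- Cardinality reduction of the time-sharing variable to at most 3 values.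
For any `g : ℝ≥0 → ℝ`, any finite `V`, probability distribution `Q_V` on `V`, and
nonnegative rates `(R_v)` with `∑ Q_V(v) R_v = R`, there is a distribution on at most three
points achieving the same rate constraint and an objective at least as large. -/
theorem stmt6 {V : Type*} [Fintype V] (g : NNReal → ℝ)
    (QV : V → ℝ) (hQVpos : ∀ v, 0 ≤ QV v) (hQV1 : ∑ v : V, QV v = 1)
    (Rv : V → NNReal) (R : ℝ) (hR : ∑ v : V, QV v * (Rv v : ℝ) = R) :
    ∃ (Q' : Fin 3 → ℝ) (R' : Fin 3 → NNReal),
      (∀ i, 0 ≤ Q' i) ∧ (∑ i : Fin 3, Q' i = 1) ∧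
      (∑ i : Fin 3, Q' i * (R' i : ℝ) = R) ∧
      (∑ v : V, QV v * g (Rv v)) ≤ ∑ i : Fin 3, Q' i * g (R' i) := by
  let p : NNReal → ℝ × ℝ := fun r ↦ (r, g r)
  have hmem : ∑ v, QV v • p (Rv v) ∈ convexHull ℝ (Set.range p) :=
    (convex_convexHull ℝ _).sum_mem (fun v _ ↦ hQVpos v) hQV1
      fun v _ ↦ subset_convexHull ℝ _ (Set.mem_range_self _)
  obtain ⟨Q', R', hQ'pos, hQ'1, hsum⟩ :=
    exists_sum_smul_eq_of_mem_convexHull_range hmem (κ := Fin 3) (by simp)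
  refine ⟨Q', R', hQ'pos, hQ'1, ?_, ?_⟩
  · simpa [p, hR, Prod.fst_sum] using congrArg Prod.fst hsum
  · simpa [p, Prod.snd_sum] using (congrArg Prod.snd hsum).ge
end
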